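/- arXiv:1402.1086 — 2 statements merged into one kernel-verified Lean document; each statement's English description precedes it below -/
import Mathlib

section
/- Let X be a Polish metric space and let a, b ∈ X. If a ≡_α b for every countable ordinal α < ω₁, then there exists a surjective isometry χ : X → X with χ(a) = b; consequently a ≡_α b for every ordinal α. -/
/-- The back-and-forth hierarchy `≡_α` on equal-length tuples of a metric space:
`≡₀` is "partial isometry", successor stages are the back-and-forth extension
condition, limit stages are intersections. -/
noncomputable def BF {X : Type} [MetricSpace X] (α : Ordinal) :
    ∀ n : ℕ, (Fin n → X) → (Fin n → X) → Prop :=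
  Ordinal.limitRecOn α
    (fun _ a b => ∀ i j, dist (a i) (a j) = dist (b i) (b j))
    (fun _ ih n a b =>
      (∀ x : X, ∃ y : X, ih (n + 1) (Fin.snoc a x) (Fin.snoc b y)) ∧
      (∀ y : X, ∃ x : X, ih (n + 1) (Fin.snoc a x) (Fin.snoc b y)))
    (fun _ _ ih n a b => ∀ β hβ, ih β hβ n a b)

/-! For each `n`, the pairs of `(n+1)`-tuples starting with `a` and `b` that are `≡_α`-equivalent
form a decreasing family of sets in a second countable space, so their closures stabilize at some
countable `α`. At such an `α`, a pair in the closure of the `≡_α`-pairs is arbitrarily close to a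
pair of `≡_{α+1}`-equivalent tuples, hence can be extended by any prescribed point on either side
at the cost of moving its coordinates by at most `ε`. Running this back-and-forth along a dense
sequence with errors `2⁻ⁿ` makes every coordinate Cauchy; the limits are two dense sequences
starting at `a` and `b` with the same distances, and the induced partial isometry extends to a
surjective isometry of `X`. Isometries preserve every `≡_α`. -/

universe u

open Ordinal Order TopologicalSpace Filter Topology

section BackAndForth

variable {X : Type} [MetricSpace X]

theorem BF_zero : BF (X := X) 0 = fun _ u v => ∀ i j, dist (u i) (u j) = dist (v i) (v j) :=
  Ordinal.limitRecOn_zero _ _ _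

theorem BF_add_one (α : Ordinal) : BF (X := X) (α + 1) = fun n u v =>
    (∀ x, ∃ y, BF α (n + 1) (Fin.snoc u x) (Fin.snoc v y)) ∧
    (∀ y, ∃ x, BF α (n + 1) (Fin.snoc u x) (Fin.snoc v y)) :=
  Ordinal.limitRecOn_add_one _ _ _ _

theorem BF_of_isSuccLimit {α : Ordinal} (hα : IsSuccLimit α) :
    BF (X := X) α = fun n u v => ∀ β < α, BF β n u v :=
  Ordinal.limitRecOn_limit _ _ _ _ hα

theorem BF.dist_eq {α : Ordinal} {n : ℕ} {u v : Fin n → X} (h : BF α n u v) (i j : Fin n) :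
    dist (u i) (u j) = dist (v i) (v j) := by
  induction α using Ordinal.limitRecOn generalizing n with
  | zero => rw [BF_zero] at h; exact h i j
  | add_one β ih =>
    rw [BF_add_one] at h
    obtain ⟨y, hy⟩ := h.1 (u i)
    simpa only [Fin.snoc_castSucc] using ih hy i.castSucc j.castSucc
  | limit β hβ ih =>
    rw [BF_of_isSuccLimit hβ] at h
    exact ih 0 hβ.bot_lt (h 0 hβ.bot_lt) i j

theorem BF.of_le {α β : Ordinal} (hβα : β ≤ α) {n : ℕ} {u v : Fin n → X} (h : BF α n u v) :
    BF β n u v := by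
  induction β using Ordinal.limitRecOn generalizing α n with
  | zero => rw [BF_zero]; exact h.dist_eq
  | add_one β ih =>
    rcases Ordinal.zero_or_succ_or_isSuccLimit α with rfl | ⟨γ, rfl⟩ | hα
    · simp at hβα
    · rw [← succ_eq_add_one, succ_le_succ_iff] at hβα
      rw [succ_eq_add_one, BF_add_one] at h
      rw [BF_add_one]
      exact ⟨fun x => (h.1 x).imp fun _ => ih hβα, fun y => (h.2 y).imp fun _ => ih hβα⟩
    · rw [BF_of_isSuccLimit hα] at h
      exact h _ (hα.add_one_lt ((lt_add_one β).trans_le hβα))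
  | limit β hβ ih =>
    rw [BF_of_isSuccLimit hβ]
    exact fun γ hγ => ih γ hγ (hγ.le.trans hβα) h

theorem BF_comp_isometryEquiv (χ : X ≃ᵢ X) (α : Ordinal) {n : ℕ} (u : Fin n → X) :
    BF α n u (χ ∘ u) := by
  induction α using Ordinal.limitRecOn generalizing n with
  | zero => rw [BF_zero]; exact fun i j => (χ.dist_eq _ _).symm
  | add_one β ih =>
    rw [BF_add_one]
    refine ⟨fun x => ⟨χ x, ?_⟩, fun y => ⟨χ.symm y, ?_⟩⟩
    · simpa only [Fin.comp_snoc] using ih (Fin.snoc u x)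
    · simpa only [Fin.comp_snoc, χ.apply_symm_apply] using ih (Fin.snoc u (χ.symm y))
  | limit β hβ ih =>
    rw [BF_of_isSuccLimit hβ]
    exact fun γ hγ => ih γ hγ u

end BackAndForth

theorem exists_lt_omega_one_closure_subset {ι : Type*} [Countable ι] {Y : ι → Type*}
    [∀ i, TopologicalSpace (Y i)] [∀ i, SecondCountableTopology (Y i)]
    (F : Ordinal.{u} → ∀ i, Set (Y i)) (hF : ∀ i, Antitone (F · i)) :
    ∃ α₀ < ω₁, ∀ α < ω₁, ∀ i, closure (F α₀ i) ⊆ closure (F α i) := by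
  -- `β o` is a countable stage at which the basic open set `o` misses `F`, if there is one.
  have hchoice : ∀ o : Σ i, countableBasis (Y i), ∃ β < ω₁,
      (∃ α < ω₁, Disjoint (o.2 : Set (Y o.1)) (F α o.1)) →
        Disjoint (o.2 : Set (Y o.1)) (F β o.1) := by
    intro o
    by_cases h : ∃ α < ω₁, Disjoint (o.2 : Set (Y o.1)) (F α o.1)
    · obtain ⟨α, hα, hd⟩ := h
      exact ⟨α, hα, fun _ => hd⟩
    · exact ⟨0, omega_pos 1, fun h' => absurd h' h⟩
  choose β hβ hdisj using hchoice
  refine ⟨⨆ o, β o, Ordinal.iSup_lt_omega_one hβ, fun α hα i x hx => ?_⟩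
  rw [(isBasis_countableBasis _).mem_closure_iff] at hx ⊢
  intro o ho hxo
  by_contra hempty
  rw [Set.not_nonempty_iff_eq_empty, ← Set.disjoint_iff_inter_eq_empty] at hempty
  obtain ⟨y, hyo, hyF⟩ := hx o ho hxo
  exact Set.disjoint_left.1 (hdisj ⟨i, o, ho⟩ ⟨α, hα, hempty⟩) hyo
    (hF i (Ordinal.le_iSup β ⟨i, o, ho⟩) hyF)

theorem exists_seq_of_forall_exists_succ {α : Type*} {P : ℕ → α → Prop} {R : ℕ → α → α → Prop}
    {a₀ : α} (h₀ : P 0 a₀) (h : ∀ n a, P n a → ∃ b, P (n + 1) b ∧ R n a b) :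
    ∃ f : ℕ → α, (∀ n, P n (f n)) ∧ ∀ n, R n (f n) (f (n + 1)) := by
  choose g hg using h
  let f : ∀ n, {a // P n a} := fun n =>
    Nat.rec ⟨a₀, h₀⟩ (fun n a => ⟨g n a a.2, (hg n a a.2).1⟩) n
  exact ⟨fun n => (f n).1, fun n => (f n).2, fun n => (hg n (f n).1 (f n).2).2⟩

theorem exists_tendsto_of_dist_succ_le {X : Type*} [PseudoMetricSpace X] [CompleteSpace X]
    {u : ℕ → X} {N : ℕ} (hu : ∀ n ≥ N, dist (u (n + 1)) (u n) ≤ 2⁻¹ ^ n) :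
    ∃ z, Tendsto u atTop (𝓝 z) ∧ ∀ n ≥ N, dist (u n) z ≤ 2 * 2⁻¹ ^ n := by
  have hgeom : ∀ j, dist (u (j + N)) (u (j + 1 + N)) ≤ 2 * 2⁻¹ ^ N / 2 / 2 ^ j := by
    intro j
    rw [dist_comm, add_right_comm]
    convert hu (j + N) (Nat.le_add_left N j) using 1
    simp only [pow_add, inv_pow]
    field_simp
  obtain ⟨z, hz⟩ := cauchySeq_tendsto_of_complete (cauchySeq_of_le_geometric_two hgeom)
  refine ⟨z, (tendsto_add_atTop_iff_nat N).1 hz, fun n hn => ?_⟩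
  obtain ⟨j, rfl⟩ := Nat.exists_eq_add_of_le' hn
  convert dist_le_of_le_geometric_two_of_tendsto hgeom hz j using 1
  simp only [pow_add, inv_pow]
  field_simp

theorem Isometry.exists_extension_of_dense {X Y : Type*} [PseudoMetricSpace X] [MetricSpace Y]
    [CompleteSpace Y]
    {s : Set X} (hs : Dense s) {f : s → Y} (hf : Isometry f) :
    ∃ F : X → Y, Isometry F ∧ ∀ x : s, F x = f x := by
  have hval := isUniformEmbedding_subtype_val (p := (· ∈ s)) |>.isUniformInducing
  set F := (hval.isDenseInducing hs.denseRange_val).extend f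
  have hF : ∀ x : s, F x = f x :=
    uniformly_extend_of_ind hval hs.denseRange_val hf.uniformContinuous
  have hFc : Continuous F :=
    (uniformContinuous_uniformly_extend hval hs.denseRange_val hf.uniformContinuous).continuous
  have hclosed : IsClosed {q : X × X | dist (F q.1) (F q.2) = dist q.1 q.2} :=
    isClosed_eq ((hFc.comp continuous_fst).dist (hFc.comp continuous_snd))
      (continuous_fst.dist continuous_snd)
  refine ⟨F, Isometry.of_dist_eq fun x y => ?_, hF⟩
  exact isClosed_property2 (p := fun x y => dist (F x) (F y) = dist x y) hs.denseRange_val hclosed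
    (fun x y => by rw [hF, hF, hf.dist_eq]; rfl) x y

theorem exists_isometryEquiv_of_denseRange_dist_eq {ι X Y : Type*} [MetricSpace X] [CompleteSpace X]
    [MetricSpace Y] [CompleteSpace Y] {U : ι → X} {V : ι → Y} (hU : DenseRange U)
    (hV : DenseRange V) (hd : ∀ i j, dist (U i) (U j) = dist (V i) (V j)) :
    ∃ χ : X ≃ᵢ Y, ∀ i, χ (U i) = V i := by
  have hUV : ∀ {i j}, U i = U j → V i = V j := fun h => dist_eq_zero.1 (by rw [← hd, h, dist_self])
  let f : Set.range U → Y := fun x => V x.2.choose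
  have hf : Isometry f := Isometry.of_dist_eq fun x y => by
    rw [← hd, x.2.choose_spec, y.2.choose_spec, Subtype.dist_eq]
  obtain ⟨F, hF, hFf⟩ := Isometry.exists_extension_of_dense hU hf
  have hFU : ∀ i, F (U i) = V i := fun i =>
    (hFf ⟨U i, i, rfl⟩).trans (hUV (Set.mem_range_self i).choose_spec)
  have hsurj : Function.Surjective F := by
    have : closure (Set.range V) ⊆ Set.range F :=
      closure_minimal (Set.range_subset_iff.2 fun i => ⟨U i, hFU i⟩)
        hF.isClosedEmbedding.isClosed_range
    exact fun y => this (hV.closure_eq ▸ Set.mem_univ y)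
  exact ⟨{ Equiv.ofBijective F ⟨hF.injective, hsurj⟩ with isometry_toFun := hF }, hFU⟩

theorem exists_seq_forall_exists_ge_eq (ι : Type*) [Countable ι] [Nonempty ι] :
    ∃ σ : ℕ → ι, ∀ k M, ∃ m ≥ M, σ m = k := by
  obtain ⟨e, he⟩ := exists_surjective_nat ι
  refine ⟨fun m => e (Nat.unpair m).1, fun k M => ?_⟩
  obtain ⟨n, rfl⟩ := he k
  exact ⟨Nat.pair n M, Nat.right_le_pair n M, by simp⟩

theorem exists_denseRange_tendsto_of_dist_succ_le {X : Type*} [PseudoMetricSpace X]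
    [CompleteSpace X] {u : ℕ → X} (hu : DenseRange u) {w : ℕ → ℕ → X}
    (hmove : ∀ n, ∀ i ≤ n, dist (w (n + 1) i) (w n i) ≤ 2⁻¹ ^ n)
    (hhit : ∀ t M, ∃ m ≥ M, w m m = u t) :
    ∃ W : ℕ → X, DenseRange W ∧ ∀ i, Tendsto (w · i) atTop (𝓝 (W i)) := by
  choose W hW hWdist using fun i => exists_tendsto_of_dist_succ_le (u := (w · i)) (hmove · i)
  refine ⟨W, dense_closure.1 (hu.mono (Set.range_subset_iff.2 fun t => ?_)), hW⟩
  refine Metric.mem_closure_range_iff.2 fun ε hε => ?_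
  obtain ⟨M, hM⟩ := exists_pow_lt_of_lt_one (half_pos hε) (by norm_num : (2⁻¹ : ℝ) < 1)
  obtain ⟨m, hmM, hm⟩ := hhit t M
  refine ⟨m, ?_⟩
  calc dist (u t) (W m) = dist (w m m) (W m) := by rw [hm]
    _ ≤ 2 * 2⁻¹ ^ m := hWdist m m le_rfl
    _ ≤ 2 * 2⁻¹ ^ M :=
        mul_le_mul_of_nonneg_left (pow_le_pow_of_le_one (by norm_num) (by norm_num) hmM) zero_le_two
    _ < ε := by linarith

section Construction

variable {X : Type} [MetricSpace X]

def bfPairs (a b : X) (α : Ordinal) (n : ℕ) : Set ((Fin (n + 1) → X) × (Fin (n + 1) → X)) :=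
  {p | p.1 0 = a ∧ p.2 0 = b ∧ BF α (n + 1) p.1 p.2}

def truncate (n : ℕ) (p : (ℕ → X) × (ℕ → X)) : (Fin (n + 1) → X) × (Fin (n + 1) → X) :=
  (p.1 ∘ (↑), p.2 ∘ (↑))

theorem bfPairs_antitone (a b : X) (n : ℕ) : Antitone (bfPairs a b · n) :=
  fun _ _ hβα _ hp => ⟨hp.1, hp.2.1, hp.2.2.of_le hβα⟩

theorem closure_bfPairs_subset (a b : X) (α : Ordinal) (n : ℕ) :
    closure (bfPairs a b α n) ⊆
      {p | p.1 0 = a ∧ p.2 0 = b ∧ ∀ i j, dist (p.1 i) (p.1 j) = dist (p.2 i) (p.2 j)} := by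
  refine closure_minimal (fun p hp => ⟨hp.1, hp.2.1, hp.2.2.dist_eq⟩) ?_
  simp only [Set.ofPred_and, Set.ofPred_forall]
  exact (isClosed_eq (by fun_prop) (by fun_prop)).inter
    ((isClosed_eq (by fun_prop) (by fun_prop)).inter
      (isClosed_iInter fun i => isClosed_iInter fun j => isClosed_eq (by fun_prop) (by fun_prop)))

theorem exists_near_extension {a b : X} {α : Ordinal} {n : ℕ} {p : (ℕ → X) × (ℕ → X)}
    (hp : truncate n p ∈ closure (bfPairs a b (α + 1) n)) {ε : ℝ} (hε : 0 < ε) (c : X ⊕ X) :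
    ∃ p' : (ℕ → X) × (ℕ → X), truncate (n + 1) p' ∈ bfPairs a b α (n + 1) ∧
      (∀ i : Fin (n + 1), dist (p'.1 i) (p.1 i) < ε ∧ dist (p'.2 i) (p.2 i) < ε) ∧
      c.elim (p'.1 (n + 1) = ·) (p'.2 (n + 1) = ·) := by
  obtain ⟨q, ⟨ha, hb, hq⟩, hpq⟩ := Metric.mem_closure_iff.1 hp ε hε
  rw [dist_comm, Prod.dist_eq, max_lt_iff] at hpq
  rw [BF_add_one] at hq
  have hext : ∀ (v : Fin (n + 1) → X) (x : X) (w : ℕ → X),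
      Function.extend Fin.val (Fin.snoc v x : Fin (n + 2) → X) w ∘ (↑) = Fin.snoc v x :=
    fun v x w => Function.extend_comp Fin.val_injective _ _
  have key : ∀ x y, BF α (n + 2) (Fin.snoc q.1 x) (Fin.snoc q.2 y) →
      ∃ p' : (ℕ → X) × (ℕ → X), truncate (n + 1) p' ∈ bfPairs a b α (n + 1) ∧
        (∀ i : Fin (n + 1), dist (p'.1 i) (p.1 i) < ε ∧ dist (p'.2 i) (p.2 i) < ε) ∧
        p'.1 (n + 1) = x ∧ p'.2 (n + 1) = y := by
    intro x y hxy
    set p' := (Function.extend Fin.val (Fin.snoc q.1 x : Fin (n + 2) → X) p.1,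
      Function.extend Fin.val (Fin.snoc q.2 y : Fin (n + 2) → X) p.2)
    have htrunc : truncate (n + 1) p' = (Fin.snoc q.1 x, Fin.snoc q.2 y) :=
      Prod.ext (hext _ _ _) (hext _ _ _)
    have happ : ∀ i : Fin (n + 2), p'.1 i = (Fin.snoc q.1 x : Fin (n + 2) → X) i ∧
        p'.2 i = (Fin.snoc q.2 y : Fin (n + 2) → X) i :=
      fun i => ⟨congrFun (congrArg Prod.fst htrunc) i, congrFun (congrArg Prod.snd htrunc) i⟩
    refine ⟨p', ?_, fun i => ?_, ?_, ?_⟩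
    · rw [htrunc]
      refine ⟨?_, ?_, hxy⟩ <;> dsimp only <;> rw [Fin.snoc_apply_zero] <;> assumption
    · have := happ i.castSucc
      simp only [Fin.val_castSucc, Fin.snoc_castSucc] at this
      rw [this.1, this.2]
      exact ⟨(dist_le_pi_dist _ _ i).trans_lt hpq.1, (dist_le_pi_dist _ _ i).trans_lt hpq.2⟩
    · simpa using (happ (Fin.last _)).1
    · simpa using (happ (Fin.last _)).2
  rcases c with x | y
  · obtain ⟨y, hy⟩ := hq.1 x
    obtain ⟨p', h, hnear, hx, -⟩ := key x y hy
    exact ⟨p', h, hnear, hx⟩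
  · obtain ⟨x, hx⟩ := hq.2 y
    obtain ⟨p', h, hnear, -, hy⟩ := key x y hx
    exact ⟨p', h, hnear, hy⟩

theorem exists_back_and_forth_chain {a b : X} {α : Ordinal} (h₀ : BF α 1 ![a] ![b])
    (hstab : ∀ n, closure (bfPairs a b α n) ⊆ closure (bfPairs a b (α + 1) n)) (c : ℕ → X ⊕ X) :
    ∃ p : ℕ → (ℕ → X) × (ℕ → X), (∀ n, truncate n (p n) ∈ closure (bfPairs a b α n)) ∧
      (∀ n, ∀ i ≤ n, dist ((p (n + 1)).1 i) ((p n).1 i) ≤ 2⁻¹ ^ n ∧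
        dist ((p (n + 1)).2 i) ((p n).2 i) ≤ 2⁻¹ ^ n) ∧
      ∀ n, (c n).elim ((p (n + 1)).1 (n + 1) = ·) ((p (n + 1)).2 (n + 1) = ·) := by
  have hp₀ : truncate 0 (fun _ => a, fun _ => b) ∈ closure (bfPairs a b α 0) := by
    refine subset_closure ⟨rfl, rfl, ?_⟩
    convert h₀ using 1 <;> ext i <;> fin_cases i <;> rfl
  have hstep : ∀ n (p : (ℕ → X) × (ℕ → X)), truncate n p ∈ closure (bfPairs a b α n) →
      ∃ p', truncate (n + 1) p' ∈ closure (bfPairs a b α (n + 1)) ∧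
        (∀ i ≤ n, dist (p'.1 i) (p.1 i) ≤ 2⁻¹ ^ n ∧ dist (p'.2 i) (p.2 i) ≤ 2⁻¹ ^ n) ∧
        (c n).elim (p'.1 (n + 1) = ·) (p'.2 (n + 1) = ·) := by
    intro n p hp
    obtain ⟨p', hp', hnear, hc⟩ :=
      exists_near_extension (hstab n hp) (by positivity : (0 : ℝ) < 2⁻¹ ^ n) (c n)
    refine ⟨p', subset_closure hp', fun i hi => ?_, hc⟩
    have := hnear ⟨i, Nat.lt_succ_of_le hi⟩
    exact ⟨this.1.le, this.2.le⟩
  obtain ⟨p, hp, hR⟩ := exists_seq_of_forall_exists_succ hp₀ hstep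
  exact ⟨p, hp, fun n => (hR n).1, fun n => (hR n).2⟩

open Cardinal in
theorem exists_denseRange_dist_eq_of_BF [CompleteSpace X] [SeparableSpace X] {a b : X}
    (h : ∀ α < ω₁, BF α 1 ![a] ![b]) :
    ∃ U V : ℕ → X, DenseRange U ∧ DenseRange V ∧ U 0 = a ∧ V 0 = b ∧
      ∀ i j, dist (U i) (U j) = dist (V i) (V j) := by
  obtain ⟨α, hα, hstab⟩ := exists_lt_omega_one_closure_subset _ (bfPairs_antitone a b)
  have : Nonempty X := ⟨a⟩
  obtain ⟨u, hu⟩ := exists_dense_seq X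
  obtain ⟨σ, hσ⟩ := exists_seq_forall_exists_ge_eq (ℕ ⊕ ℕ)
  obtain ⟨p, hp, hmove, hhit⟩ := exists_back_and_forth_chain (h α hα)
    (hstab (α + 1) ((isSuccLimit_omega 1).add_one_lt hα)) (Sum.map u u ∘ σ)
  have hinv := fun n => closure_bfPairs_subset a b α n (hp n)
  obtain ⟨U, hUd, hU⟩ := exists_denseRange_tendsto_of_dist_succ_le hu (w := fun n i => (p n).1 i)
    (fun n i hi => (hmove n i hi).1) fun t M => by
      obtain ⟨m, hm, hσm⟩ := hσ (.inl t) M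
      exact ⟨m + 1, by omega, by simpa [hσm] using hhit m⟩
  obtain ⟨V, hVd, hV⟩ := exists_denseRange_tendsto_of_dist_succ_le hu (w := fun n i => (p n).2 i)
    (fun n i hi => (hmove n i hi).2) fun t M => by
      obtain ⟨m, hm, hσm⟩ := hσ (.inr t) M
      exact ⟨m + 1, by omega, by simpa [hσm] using hhit m⟩
  refine ⟨U, V, hUd, hVd, tendsto_nhds_unique (hU 0) ?_, tendsto_nhds_unique (hV 0) ?_,
    fun i j => tendsto_nhds_unique_of_eventuallyEq ((hU i).dist (hU j)) ((hV i).dist (hV j)) ?_⟩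
  · exact tendsto_const_nhds.congr fun n => (hinv n).1.symm
  · exact tendsto_const_nhds.congr fun n => (hinv n).2.1.symm
  · filter_upwards [eventually_ge_atTop (max i j)] with n hn
    exact (hinv n).2.2 ⟨i, by omega⟩ ⟨j, by omega⟩

end Construction

/-- Let `X` be a Polish metric space and `a, b ∈ X`. If `a ≡_α b` for every countable
ordinal `α < ω₁`, then there is a surjective isometry `χ : X → X` with `χ(a) = b`;
consequently `a ≡_α b` for every ordinal `α`. -/
theorem isometry_of_BF_countable {X : Type} [MetricSpace X] [CompleteSpace X]
    [TopologicalSpace.SeparableSpace X] (a b : X)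
    (h : ∀ α : Ordinal, α < (Cardinal.aleph 1).ord → BF α 1 ![a] ![b]) :
    (∃ χ : X ≃ᵢ X, χ a = b) ∧ ∀ α : Ordinal, BF α 1 ![a] ![b] := by
  rw [Cardinal.ord_aleph] at h
  obtain ⟨U, V, hU, hV, rfl, rfl, hd⟩ := exists_denseRange_dist_eq_of_BF h
  obtain ⟨χ, hχ⟩ := exists_isometryEquiv_of_denseRange_dist_eq hU hV hd
  refine ⟨⟨χ, hχ 0⟩, fun α => ?_⟩
  convert BF_comp_isometryEquiv χ α ![U 0] using 1
  ext i
  fin_cases i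
  exact (hχ 0).symm
end

section
/- A metric space X is ultrahomogeneous (every distance-preserving bijection between two finite subsets extends to a surjective isometry of X) if and only if its Scott rank is 0, i.e., for all equal-length tuples ā, b̄, if ā ≡₀ b̄ (the map ā ↦ b̄ is a partial isometry) then ā ≡_α b̄ for all ordinals α. -/
universe u

open Function

theorem Ordinal.exists_forall_of_antitone {Y : Type*} [Small.{u} Y] (P : Y → Ordinal.{u} → Prop)
    (hP : ∀ y, Antitone (P y)) (h : ∀ α, ∃ y, P y α) : ∃ y, ∀ α, P y α := by
  by_contra! hc
  choose g hg using hc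
  obtain ⟨y, hy⟩ := h (⨆ y, g y)
  exact hg y (hP y (Ordinal.le_iSup g y) hy)

theorem Fin.snoc_comp_snoc_castSucc_comp {Z : Type*} {m n : ℕ} (a : Fin n → Z) (x : Z)
    (f : Fin m → Fin n) :
    Fin.snoc a x ∘ Fin.snoc (Fin.castSucc ∘ f) (Fin.last n) = Fin.snoc (a ∘ f) x := by
  funext i
  refine Fin.lastCases ?_ (fun j => ?_) i <;> simp

namespace BF

variable {X : Type} [MetricSpace X] {n : ℕ} {a b : Fin n → X}

theorem zero_iff : BF 0 n a b ↔ ∀ i j, dist (a i) (a j) = dist (b i) (b j) := by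
  unfold BF; rw [Ordinal.limitRecOn_zero]

theorem add_one_iff {α : Ordinal} :
    BF (α + 1) n a b ↔ (∀ x, ∃ y, BF α (n + 1) (Fin.snoc a x) (Fin.snoc b y)) ∧
      (∀ y, ∃ x, BF α (n + 1) (Fin.snoc a x) (Fin.snoc b y)) := by
  unfold BF; rw [Ordinal.limitRecOn_add_one]

theorem limit_iff {α : Ordinal} (hα : Order.IsSuccLimit α) :
    BF α n a b ↔ ∀ β < α, BF β n a b := by
  unfold BF; rw [Ordinal.limitRecOn_limit _ _ _ _ hα]

theorem comp {α : Ordinal} (h : BF α n a b) {m : ℕ} (f : Fin m → Fin n) :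
    BF α m (a ∘ f) (b ∘ f) := by
  induction α using Ordinal.limitRecOn generalizing n m a b with
  | zero => exact zero_iff.2 fun i j => zero_iff.1 h (f i) (f j)
  | add_one α ih =>
    obtain ⟨hforth, hback⟩ := add_one_iff.1 h
    have extend : ∀ x y, BF α (n + 1) (Fin.snoc a x) (Fin.snoc b y) →
        BF α (m + 1) (Fin.snoc (a ∘ f) x) (Fin.snoc (b ∘ f) y) := fun x y hxy => by
      simpa only [Fin.snoc_comp_snoc_castSucc_comp] using
        ih hxy (Fin.snoc (Fin.castSucc ∘ f) (Fin.last n))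
    refine add_one_iff.2 ⟨fun x => ?_, fun y => ?_⟩
    · obtain ⟨y, hy⟩ := hforth x
      exact ⟨y, extend x y hy⟩
    · obtain ⟨x, hx⟩ := hback y
      exact ⟨x, extend x y hx⟩
  | limit α hα ih =>
    exact (limit_iff hα).2 fun β hβ => ih β hβ ((limit_iff hα).1 h β hβ) f

theorem of_snoc {α : Ordinal} {x y : X} (h : BF α (n + 1) (Fin.snoc a x) (Fin.snoc b y)) :
    BF α n a b := by
  simpa only [Fin.snoc_comp_castSucc] using h.comp Fin.castSucc

theorem mono [Nonempty X] {α β : Ordinal} (hβα : β ≤ α) (h : BF α n a b) :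
    BF β n a b := by
  induction α using Ordinal.limitRecOn generalizing β n a b with
  | zero => rwa [nonpos_iff_eq_zero.1 hβα]
  | add_one α ih =>
    rcases hβα.eq_or_lt with rfl | hβα
    · exact h
    obtain ⟨y, hy⟩ := (add_one_iff.1 h).1 (Classical.arbitrary X)
    exact ih (Order.lt_add_one_iff.1 hβα) hy.of_snoc
  | limit α hα _ =>
    rcases hβα.eq_or_lt with rfl | hβα
    · exact h
    exact (limit_iff hα).1 h β hβα

theorem of_isometryEquiv (χ : X ≃ᵢ X) (h : ∀ i, χ (a i) = b i) (α : Ordinal) :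
    BF α n a b := by
  induction α using Ordinal.limitRecOn generalizing n a b with
  | zero => exact zero_iff.2 fun i j => by rw [← h, ← h, χ.dist_eq]
  | add_one α ih =>
    refine add_one_iff.2 ⟨fun x => ⟨χ x, ih ?_⟩, fun y => ⟨χ.symm y, ih ?_⟩⟩ <;>
      exact Fin.lastCases (by simp) (by simp [h])
  | limit α hα ih => exact (limit_iff hα).2 fun β hβ => ih β hβ h

theorem forth_of_forall (h : ∀ α : Ordinal.{u}, BF α n a b) (x : X) :
    ∃ y, ∀ α : Ordinal.{u}, BF α (n + 1) (Fin.snoc a x) (Fin.snoc b y) :=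
  have : Nonempty X := ⟨x⟩
  Ordinal.exists_forall_of_antitone _ (fun _ _ _ hαβ hβ => hβ.mono hαβ)
    fun α => (add_one_iff.1 (h (α + 1))).1 x

theorem back_of_forall (h : ∀ α : Ordinal.{u}, BF α n a b) (y : X) :
    ∃ x, ∀ α : Ordinal.{u}, BF α (n + 1) (Fin.snoc a x) (Fin.snoc b y) :=
  have : Nonempty X := ⟨y⟩
  Ordinal.exists_forall_of_antitone _ (fun _ _ _ hαβ hβ => hβ.mono hαβ)
    fun α => (add_one_iff.1 (h (α + 1))).2 y

end BF

theorem IsometryEquiv.exists_of_dist_eq {ι X Y : Type*} [MetricSpace X] [MetricSpace Y]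
    (A : ι → X) (B : ι → Y) (hA : Surjective A) (hB : Surjective B)
    (h : ∀ i j, dist (A i) (A j) = dist (B i) (B j)) :
    ∃ χ : X ≃ᵢ Y, ∀ i, χ (A i) = B i := by
  let f : X → Y := fun x => B (surjInv hA x)
  have hf : ∀ i, f (A i) = B i := fun i => by
    rw [← dist_eq_zero, ← h, surjInv_eq hA, dist_self]
  have hiso : Isometry f := Isometry.of_dist_eq fun x y => by
    rw [← h, surjInv_eq hA, surjInv_eq hA]
  have hsurj : Surjective f := fun y => by
    obtain ⟨i, rfl⟩ := hB y
    exact ⟨A i, hf i⟩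
  exact ⟨⟨Equiv.ofBijective f ⟨hiso.injective, hsurj⟩, hiso⟩, hf⟩

theorem Fin.exists_seq_of_castSucc {Z : Type*} {n : ℕ} (t : ∀ k, Fin (n + k) → Z)
    (ht : ∀ k (i : Fin (n + k)), t (k + 1) i.castSucc = t k i) :
    ∃ s : ℕ → Z, ∀ k (i : Fin (n + k)), t k i = s i := by
  have coh : ∀ k k', k ≤ k' → ∀ (i : ℕ) (hi : i < n + k) (hi' : i < n + k'),
      t k' ⟨i, hi'⟩ = t k ⟨i, hi⟩ := by
    intro k k' hk
    induction k', hk using Nat.le_induction with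
    | base => exact fun _ _ _ => rfl
    | succ k' hk ih => exact fun i hi hi' => (ht k' ⟨i, by omega⟩).trans (ih i hi _)
  refine ⟨fun j => t (j + 1) ⟨j, by omega⟩, fun k ⟨i, hi⟩ => ?_⟩
  rcases le_total k (i + 1) with hk | hk
  · exact (coh _ _ hk _ _ _).symm
  · exact coh _ _ hk _ _ _

section BackAndForth

variable {X Y : Type*} (R : ∀ n, (Fin n → X) → (Fin n → Y) → Prop)

abbrev RelatedTuples (n : ℕ) := {p : (Fin n → X) × (Fin n → Y) // R n p.1 p.2}

variable {R} (forth : ∀ n a b, R n a b → ∀ x, ∃ y, R (n + 1) (Fin.snoc a x) (Fin.snoc b y))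
  (back : ∀ n a b, R n a b → ∀ y, ∃ x, R (n + 1) (Fin.snoc a x) (Fin.snoc b y))

noncomputable def RelatedTuples.extend {n : ℕ} (p : RelatedTuples R n) :
    X ⊕ Y → RelatedTuples R (n + 1)
  | .inl x => ⟨(Fin.snoc p.1.1 x, Fin.snoc p.1.2 (forth n _ _ p.2 x).choose),
      (forth n _ _ p.2 x).choose_spec⟩
  | .inr y => ⟨(Fin.snoc p.1.1 (back n _ _ p.2 y).choose, Fin.snoc p.1.2 y),
      (back n _ _ p.2 y).choose_spec⟩

/-- The back-and-forth construction from `p`; step `k` puts `e k` into the tuple on its side. -/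
noncomputable def RelatedTuples.tower (e : ℕ → X ⊕ Y) {n : ℕ} (p : RelatedTuples R n) :
    ∀ k, RelatedTuples R (n + k)
  | 0 => p
  | k + 1 => (tower e p k).extend forth back (e k)

variable {forth back} {e : ℕ → X ⊕ Y} {n : ℕ} {p : RelatedTuples R n}

theorem RelatedTuples.tower_succ_castSucc (k : ℕ) (i : Fin (n + k)) :
    (p.tower forth back e (k + 1)).1.1 i.castSucc = (p.tower forth back e k).1.1 i ∧
      (p.tower forth back e (k + 1)).1.2 i.castSucc = (p.tower forth back e k).1.2 i := by
  simp only [tower]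
  cases e k <;> simp [extend]

theorem RelatedTuples.tower_succ_last_of_inl {k : ℕ} {x : X} (hk : e k = .inl x) :
    (p.tower forth back e (k + 1)).1.1 (Fin.last _) = x := by
  simp [tower, hk, extend]

theorem RelatedTuples.tower_succ_last_of_inr {k : ℕ} {y : Y} (hk : e k = .inr y) :
    (p.tower forth back e (k + 1)).1.2 (Fin.last _) = y := by
  simp [tower, hk, extend]

end BackAndForth

theorem exists_isometryEquiv_of_backAndForth {X Y : Type*} [MetricSpace X] [MetricSpace Y]
    [Countable X] [Countable Y] {R : ∀ n, (Fin n → X) → (Fin n → Y) → Prop}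
    (hdist : ∀ n a b, R n a b → ∀ i j, dist (a i) (a j) = dist (b i) (b j))
    (forth : ∀ n a b, R n a b → ∀ x, ∃ y, R (n + 1) (Fin.snoc a x) (Fin.snoc b y))
    (back : ∀ n a b, R n a b → ∀ y, ∃ x, R (n + 1) (Fin.snoc a x) (Fin.snoc b y))
    {n : ℕ} {a : Fin n → X} {b : Fin n → Y} (hab : R n a b) :
    ∃ χ : X ≃ᵢ Y, ∀ i, χ (a i) = b i := by
  rcases isEmpty_or_nonempty (X ⊕ Y) with hXY | hXY
  · exact IsometryEquiv.exists_of_dist_eq a b (fun x => isEmptyElim (Sum.inl x : X ⊕ Y))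
      (fun y => isEmptyElim (Sum.inr y : X ⊕ Y)) (hdist n a b hab)
  obtain ⟨e, he⟩ := exists_surjective_nat (X ⊕ Y)
  let t := RelatedTuples.tower forth back e ⟨(a, b), hab⟩
  obtain ⟨A, hA⟩ := Fin.exists_seq_of_castSucc (fun k => (t k).1.1)
    fun k i => (RelatedTuples.tower_succ_castSucc k i).1
  obtain ⟨B, hB⟩ := Fin.exists_seq_of_castSucc (fun k => (t k).1.2)
    fun k i => (RelatedTuples.tower_succ_castSucc k i).2
  have hA_surj : Surjective A := fun x => by
    obtain ⟨k, hk⟩ := he (.inl x)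
    exact ⟨n + k, (hA (k + 1) (Fin.last _)).symm.trans
      (RelatedTuples.tower_succ_last_of_inl hk)⟩
  have hB_surj : Surjective B := fun y => by
    obtain ⟨k, hk⟩ := he (.inr y)
    exact ⟨n + k, (hB (k + 1) (Fin.last _)).symm.trans
      (RelatedTuples.tower_succ_last_of_inr hk)⟩
  have hAB : ∀ i j, dist (A i) (A j) = dist (B i) (B j) := fun i j => by
    have := hdist _ _ _ (t (i + j + 1)).2 ⟨i, by omega⟩ ⟨j, by omega⟩
    rwa [hA, hA, hB, hB] at this
  obtain ⟨χ, hχ⟩ := IsometryEquiv.exists_of_dist_eq A B hA_surj hB_surj hAB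
  refine ⟨χ, fun i => ?_⟩
  have := hχ i
  rwa [← hA 0 i, ← hB 0 i] at this

/-- A countable metric space `X` is ultrahomogeneous (every distance-preserving
correspondence between finite tuples extends to a surjective isometry of `X`) iff its
Scott rank is `0`, i.e. for all equal-length tuples, `ā ≡₀ b̄` (the map `ā ↦ b̄` is a
partial isometry) implies `ā ≡_α b̄` for all ordinals `α`. -/
theorem ultrahomogeneous_iff_scott_rank_zero {X : Type} [MetricSpace X] [Countable X] :
    (∀ (n : ℕ) (a b : Fin n → X),
        (∀ i j, dist (a i) (a j) = dist (b i) (b j)) →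
        ∃ χ : X ≃ᵢ X, ∀ i, χ (a i) = b i) ↔
    (∀ (n : ℕ) (a b : Fin n → X), BF 0 n a b → ∀ α : Ordinal, BF α n a b) := by
  refine ⟨fun H n a b h0 => ?_, fun H n a b hab => ?_⟩
  · obtain ⟨χ, hχ⟩ := H n a b (BF.zero_iff.1 h0)
    exact BF.of_isometryEquiv χ hχ
  · exact exists_isometryEquiv_of_backAndForth (R := fun n a b => ∀ α, BF α n a b)
      (fun _ _ _ h => BF.zero_iff.1 (h 0))
      (fun _ _ _ => BF.forth_of_forall) (fun _ _ _ => BF.back_of_forall)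
      (H n a b (BF.zero_iff.2 hab))
end
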